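/- arXiv:2209.07835 — 4 statements merged into one kernel-verified Lean document; each statement's English description precedes it below -/
import Mathlib

section
/- Let r : ℝ → ℝ be three times continuously differentiable, τ > 0, and t ∈ ℝ. Then |(3r(t) - 4r(t-τ) + r(t-2τ))/(2τ) - r'(t)|² ≤ (τ³/2) ∫_{t-2τ}^{t} |r'''(s)|² ds. -/
/-!
Expanding `r(t - τ)` and `r(t - 2τ)` by Taylor's formula about `t` with integral remainder, the
polynomial parts cancel in the BDF-2 combination, leaving the Peano-kernel representation
`3r(t) - 4r(t-τ) + r(t-2τ) - 2τ r'(t) = ∫_{t-2τ}^t K(s) r'''(s) ds` with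
`K(s) = 2 (s - (t-τ))₊² - (s - (t-2τ))² / 2`. On `[t-2τ, t]` one has `|K| ≤ τ²`, so
`∫ K² ≤ 2τ⁵`, and Cauchy–Schwarz gives `(2τ)² |Dr(t) - r'(t)|² ≤ 2τ⁵ ∫ |r'''|²`.
-/

open intervalIntegral Finset Nat

theorem sq_integral_mul_le_integral_sq_mul_integral_sq {f g : ℝ → ℝ} (hf : Continuous f)
    (hg : Continuous g) {a b : ℝ} (hab : a ≤ b) :
    (∫ s in a..b, f s * g s) ^ 2 ≤ (∫ s in a..b, f s ^ 2) * ∫ s in a..b, g s ^ 2 := by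
  have hquad : ∀ x : ℝ, 0 ≤ (∫ s in a..b, f s ^ 2) * (x * x) + 2 * (∫ s in a..b, f s * g s) * x
      + ∫ s in a..b, g s ^ 2 := fun x => by
    have hexpand : ∫ s in a..b, (x * f s + g s) ^ 2 = (∫ s in a..b, f s ^ 2) * (x * x)
        + 2 * (∫ s in a..b, f s * g s) * x + ∫ s in a..b, g s ^ 2 := by
      have hint : ∀ h : ℝ → ℝ, Continuous h → IntervalIntegrable h MeasureTheory.volume a b :=
        fun h hh => hh.intervalIntegrable a b
      simp_rw [add_sq, mul_pow]
      rw [integral_add (hint _ (by fun_prop)) (hint _ (by fun_prop)),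
        integral_add (hint _ (by fun_prop)) (hint _ (by fun_prop))]
      simp_rw [mul_assoc, integral_const_mul]
      ring
    exact hexpand ▸ integral_nonneg hab fun s _ => sq_nonneg _
  have := discrim_le_zero hquad
  rw [discrim] at this
  linarith

theorem taylor_integral_remainder_of_contDiff {f : ℝ → ℝ} {n : ℕ} (hf : ContDiff ℝ (n + 1) f)
    (x₀ x : ℝ) :
    f x = ∑ k ∈ range (n + 1), iteratedDeriv k f x₀ * (x - x₀) ^ k / k ! +
      ∫ s in x₀..x, (x - s) ^ n / n ! * iteratedDeriv (n + 1) f s := by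
  rcases eq_or_ne x₀ x with rfl | hne
  · simp [sum_range_succ']
  have hu : UniqueDiffOn ℝ (Set.uIcc x₀ x) := uniqueDiffOn_uIcc hne
  have hderiv : ∀ k ≤ n + 1, ∀ y ∈ Set.uIcc x₀ x,
      iteratedDerivWithin k f (Set.uIcc x₀ x) y = iteratedDeriv k f y := fun k hk y hy =>
    iteratedDerivWithin_eq_iteratedDeriv hu ((hf.of_le (by exact_mod_cast hk)).contDiffAt) hy
  have h := taylor_integral_remainder (x₀ := x₀) (x := x) (n := n) (by exact_mod_cast hf.contDiffOn)
  rw [taylor_within_apply] at h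
  have hsum : ∑ k ∈ range (n + 1),
        ((k ! : ℝ)⁻¹ * (x - x₀) ^ k) • iteratedDerivWithin k f (Set.uIcc x₀ x) x₀
      = ∑ k ∈ range (n + 1), iteratedDeriv k f x₀ * (x - x₀) ^ k / k ! :=
    sum_congr rfl fun k hk => by
      rw [hderiv k (by grind) x₀ Set.left_mem_uIcc, smul_eq_mul]
      ring
  have hint : ∫ s in x₀..x, ((x - s) ^ n / n !) • iteratedDerivWithin (n + 1) f (Set.uIcc x₀ x) s
      = ∫ s in x₀..x, (x - s) ^ n / n ! * iteratedDeriv (n + 1) f s :=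
    integral_congr fun s hs => by rw [hderiv (n + 1) le_rfl s hs, smul_eq_mul]
  rw [hsum, hint] at h
  linarith

theorem integral_max_sub_pow_mul {g : ℝ → ℝ} (hg : Continuous g) {n : ℕ} (hn : n ≠ 0)
    {a b c : ℝ} (hba : b ≤ a) (hac : a ≤ c) :
    ∫ s in b..c, max (s - a) 0 ^ n * g s = ∫ s in a..c, (s - a) ^ n * g s := by
  have hcont : Continuous fun s => max (s - a) 0 ^ n * g s := by fun_prop
  rw [← integral_add_adjacent_intervals (b := a) (hcont.intervalIntegrable _ _)
    (hcont.intervalIntegrable _ _)]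
  have hleft : ∫ s in b..a, max (s - a) 0 ^ n * g s = 0 := by
    rw [← integral_zero]
    refine integral_congr fun s hs => ?_
    simp [max_eq_right (sub_nonpos.mpr (Set.uIcc_of_le hba ▸ hs).2), hn]
  rw [hleft, zero_add]
  refine integral_congr fun s hs => ?_
  simp [max_eq_left (sub_nonneg.mpr (Set.uIcc_of_le hac ▸ hs).1)]

theorem taylor_two_integral_backward {r : ℝ → ℝ} (hr : ContDiff ℝ 3 r) (t x : ℝ) :
    r x = r t + deriv r t * (x - t) + iteratedDeriv 2 r t * (x - t) ^ 2 / 2 -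
      (∫ s in x..t, (s - x) ^ 2 * iteratedDeriv 3 r s) / 2 := by
  have hrem : ∫ s in t..x, (x - s) ^ 2 / (2 ! : ℕ) * iteratedDeriv (2 + 1) r s
      = -((∫ s in x..t, (s - x) ^ 2 * iteratedDeriv 3 r s) / 2) := by
    rw [integral_symm, ← integral_div]
    congr 1
    exact integral_congr fun s _ => by norm_num; ring
  have h := taylor_integral_remainder_of_contDiff (n := 2) hr t x
  rw [hrem] at h
  norm_num [sum_range_succ] at h
  linarith

noncomputable def bdf2PeanoKernel (τ t s : ℝ) : ℝ :=
  2 * max (s - (t - τ)) 0 ^ 2 - (s - (t - 2 * τ)) ^ 2 / 2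

theorem continuous_bdf2PeanoKernel (τ t : ℝ) : Continuous (bdf2PeanoKernel τ t) := by
  unfold bdf2PeanoKernel
  fun_prop

theorem bdf2_residual_eq_integral_peanoKernel {r : ℝ → ℝ} (hr : ContDiff ℝ 3 r) {τ : ℝ}
    (hτ : 0 ≤ τ) (t : ℝ) :
    3 * r t - 4 * r (t - τ) + r (t - 2 * τ) - 2 * τ * deriv r t =
      ∫ s in (t - 2 * τ)..t, bdf2PeanoKernel τ t s * iteratedDeriv 3 r s := by
  have hg : Continuous (iteratedDeriv 3 r) := hr.continuous_iteratedDeriv 3 le_rfl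
  have hsplit : ∫ s in (t - 2 * τ)..t, bdf2PeanoKernel τ t s * iteratedDeriv 3 r s
      = 2 * (∫ s in (t - τ)..t, (s - (t - τ)) ^ 2 * iteratedDeriv 3 r s)
        - (∫ s in (t - 2 * τ)..t, (s - (t - 2 * τ)) ^ 2 * iteratedDeriv 3 r s) / 2 := by
    rw [← integral_max_sub_pow_mul hg two_ne_zero (by linarith : t - 2 * τ ≤ t - τ)
      (by linarith), ← integral_const_mul, ← integral_div, ← integral_sub]
    · exact integral_congr fun s _ => by simp only [bdf2PeanoKernel]; ring
    all_goals exact Continuous.intervalIntegrable (by fun_prop) _ _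
  rw [hsplit, taylor_two_integral_backward hr t (t - τ), taylor_two_integral_backward hr t (t - 2 * τ)]
  ring

theorem sq_bdf2PeanoKernel_le {τ t s : ℝ} (hs : s ∈ Set.Icc (t - 2 * τ) t) :
    bdf2PeanoKernel τ t s ^ 2 ≤ τ ^ 4 := by
  obtain ⟨h1, h2⟩ := hs
  have hK : -τ ^ 2 ≤ bdf2PeanoKernel τ t s ∧ bdf2PeanoKernel τ t s ≤ τ ^ 2 := by
    rcases le_total (s - (t - τ)) 0 with h | h
    · rw [bdf2PeanoKernel, max_eq_right h]
      constructor <;> nlinarith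
    · rw [bdf2PeanoKernel, max_eq_left h]
      constructor <;> nlinarith
  calc bdf2PeanoKernel τ t s ^ 2 ≤ (τ ^ 2) ^ 2 := sq_le_sq' hK.1 hK.2
    _ = τ ^ 4 := by ring

theorem integral_sq_bdf2PeanoKernel_le {τ : ℝ} (hτ : 0 ≤ τ) (t : ℝ) :
    ∫ s in (t - 2 * τ)..t, bdf2PeanoKernel τ t s ^ 2 ≤ 2 * τ ^ 5 :=
  calc ∫ s in (t - 2 * τ)..t, bdf2PeanoKernel τ t s ^ 2
      ≤ ∫ _ in (t - 2 * τ)..t, τ ^ 4 :=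
        integral_mono_on (by linarith)
          (((continuous_bdf2PeanoKernel τ t).pow 2).intervalIntegrable _ _)
          intervalIntegrable_const fun _ hs => sq_bdf2PeanoKernel_le hs
    _ = 2 * τ ^ 5 := by simp only [integral_const, smul_eq_mul]; ring

theorem stmt_7 (r : ℝ → ℝ) (hr : ContDiff ℝ 3 r) (τ : ℝ) (hτ : 0 < τ) (t : ℝ) :
    |(3 * r t - 4 * r (t - τ) + r (t - 2*τ)) / (2*τ) - deriv r t|^2
      ≤ τ^3 / 2 * ∫ s in (t - 2*τ)..t, |iteratedDeriv 3 r s|^2 := by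
  have hle : t - 2 * τ ≤ t := by linarith
  have hM : 0 ≤ ∫ s in (t - 2 * τ)..t, iteratedDeriv 3 r s ^ 2 :=
    integral_nonneg hle fun s _ => sq_nonneg _
  calc |(3 * r t - 4 * r (t - τ) + r (t - 2*τ)) / (2*τ) - deriv r t|^2
      = (∫ s in (t - 2 * τ)..t, bdf2PeanoKernel τ t s * iteratedDeriv 3 r s) ^ 2
          / (2 * τ) ^ 2 := by
        rw [sq_abs, ← bdf2_residual_eq_integral_peanoKernel hr hτ.le, ← div_pow]
        field_simp
    _ ≤ (∫ s in (t - 2 * τ)..t, bdf2PeanoKernel τ t s ^ 2)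
          * (∫ s in (t - 2 * τ)..t, iteratedDeriv 3 r s ^ 2) / (2 * τ) ^ 2 := by
        gcongr
        exact sq_integral_mul_le_integral_sq_mul_integral_sq (continuous_bdf2PeanoKernel τ t)
          (hr.continuous_iteratedDeriv 3 le_rfl) hle
    _ ≤ 2 * τ ^ 5 * (∫ s in (t - 2 * τ)..t, iteratedDeriv 3 r s ^ 2) / (2 * τ) ^ 2 := by
        gcongr
        exact integral_sq_bdf2PeanoKernel_le hτ.le t
    _ = τ^3 / 2 * ∫ s in (t - 2*τ)..t, |iteratedDeriv 3 r s|^2 := by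
        simp only [sq_abs]
        field_simp
end

section
/- Let r : ℝ → ℝ be twice continuously differentiable, τ > 0, and t ∈ ℝ. Then |r(t) - 2r(t-τ) + r(t-2τ)|² ≤ (2τ³/3) ∫_{t-2τ}^{t} |r''(s)|² ds. -/
/-!
Taylor's formula with integral remainder around `t - τ`, applied on both sides, writes the second
difference as `A + B` with `A = ∫_{t-2τ}^{t-τ} (s - (t - 2τ)) r''(s) ds` and
`B = ∫_{t-τ}^{t} (t - s) r''(s) ds`. By Cauchy–Schwarz, `A²` and `B²` are at most `τ³/3` times
`∫ r''²` over the respective half-interval, and `(A + B)² ≤ 2 (A² + B²)`.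
-/

open intervalIntegral Set

theorem sq_intervalIntegral_mul_le {f g : ℝ → ℝ} (hf : Continuous f) (hg : Continuous g)
    (a b : ℝ) :
    (∫ s in a..b, f s * g s) ^ 2 ≤ (∫ s in a..b, f s ^ 2) * ∫ s in a..b, g s ^ 2 := by
  wlog hab : a ≤ b generalizing a b
  · simpa only [integral_symm b a, neg_sq, neg_mul_neg] using this b a (le_of_not_ge hab)
  have hquad : ∀ x : ℝ, 0 ≤ (∫ s in a..b, f s ^ 2) * (x * x)
      + 2 * (∫ s in a..b, f s * g s) * x + ∫ s in a..b, g s ^ 2 := by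
    intro x
    have hexpand : (fun s => (x * f s + g s) ^ 2)
        = fun s => x * x * f s ^ 2 + 2 * x * (f s * g s) + g s ^ 2 := by
      funext s; ring
    have hnonneg : 0 ≤ ∫ s in a..b, (x * f s + g s) ^ 2 :=
      integral_nonneg hab fun s _ => sq_nonneg _
    rw [hexpand, integral_add, integral_add, integral_const_mul, integral_const_mul] at hnonneg
    · linarith
    all_goals exact (by fun_prop : Continuous _).intervalIntegrable _ _
  have hdiscrim := discrim_le_zero hquad
  unfold discrim at hdiscrim
  nlinarith

section Taylor

variable {r r' r'' : ℝ → ℝ} {a b : ℝ}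

theorem taylor_integral_remainder_left (hr : ∀ x ∈ uIcc a b, HasDerivAt r (r' x) x)
    (hr' : ∀ x ∈ uIcc a b, HasDerivAt r' (r'' x) x)
    (hr'' : IntervalIntegrable r'' MeasureTheory.volume a b) :
    ∫ s in a..b, (b - s) * r'' s = r b - r a - (b - a) * r' a := by
  have hderiv : ∀ x ∈ uIcc a b,
      HasDerivAt (fun y => (b - y) * r' y + r y) ((b - x) * r'' x) x := fun x hx =>
    ((((hasDerivAt_id x).const_sub b).mul (hr' x hx)).add (hr x hx)).congr_deriv (by simp)
  rw [integral_eq_sub_of_hasDerivAt hderiv (hr''.continuousOn_mul (by fun_prop))]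
  ring

theorem taylor_integral_remainder_right (hr : ∀ x ∈ uIcc a b, HasDerivAt r (r' x) x)
    (hr' : ∀ x ∈ uIcc a b, HasDerivAt r' (r'' x) x)
    (hr'' : IntervalIntegrable r'' MeasureTheory.volume a b) :
    ∫ s in a..b, (s - a) * r'' s = r a - r b + (b - a) * r' b := by
  have hderiv : ∀ x ∈ uIcc a b,
      HasDerivAt (fun y => (y - a) * r' y - r y) ((x - a) * r'' x) x := fun x hx =>
    ((((hasDerivAt_id x).sub_const a).mul (hr' x hx)).sub (hr x hx)).congr_deriv (by simp)
  rw [integral_eq_sub_of_hasDerivAt hderiv (hr''.continuousOn_mul (by fun_prop))]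
  ring

end Taylor

theorem sq_integral_sub_mul_le {f : ℝ → ℝ} (hf : Continuous f) (a b : ℝ) :
    (∫ s in a..b, (b - s) * f s) ^ 2 ≤ (b - a) ^ 3 / 3 * ∫ s in a..b, f s ^ 2 := by
  have hkernel : ∫ s in a..b, (b - s) ^ 2 = (b - a) ^ 3 / 3 := by
    simp [integral_comp_sub_left fun x => x ^ 2]; norm_num
  simpa only [hkernel] using sq_intervalIntegral_mul_le (f := (b - ·)) (by fun_prop) hf a b

theorem sq_integral_mul_sub_le {f : ℝ → ℝ} (hf : Continuous f) (a b : ℝ) :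
    (∫ s in a..b, (s - a) * f s) ^ 2 ≤ (b - a) ^ 3 / 3 * ∫ s in a..b, f s ^ 2 := by
  have hkernel : ∫ s in a..b, (s - a) ^ 2 = (b - a) ^ 3 / 3 := by
    simp [integral_comp_sub_right fun x => x ^ 2]; norm_num
  simpa only [hkernel] using sq_intervalIntegral_mul_le (f := (· - a)) (by fun_prop) hf a b

theorem stmt_8_general (r : ℝ → ℝ) (hr : ContDiff ℝ 2 r) (τ : ℝ) (t : ℝ) :
    |r t - 2 * r (t - τ) + r (t - 2*τ)|^2
      ≤ 2 * τ^3 / 3 * ∫ s in (t - 2*τ)..t, |iteratedDeriv 2 r s|^2 := by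
  have hr₁ : ∀ x, HasDerivAt r (deriv r x) x := fun x =>
    (hr.differentiable (by norm_num) x).hasDerivAt
  have hr₂ : ∀ x, HasDerivAt (deriv r) (iteratedDeriv 2 r x) x := fun x => by
    rw [iteratedDeriv_succ, iteratedDeriv_one]
    exact ((hr.iterate_deriv' 1 1).differentiable (by norm_num) x).hasDerivAt
  have hf : Continuous (iteratedDeriv 2 r) := hr.continuous_iteratedDeriv 2 le_rfl
  have hA := taylor_integral_remainder_right (a := t - 2 * τ) (b := t - τ)
    (fun x _ => hr₁ x) (fun x _ => hr₂ x) (hf.intervalIntegrable _ _)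
  have hB := taylor_integral_remainder_left (a := t - τ) (b := t)
    (fun x _ => hr₁ x) (fun x _ => hr₂ x) (hf.intervalIntegrable _ _)
  have hA2 := sq_integral_mul_sub_le hf (t - 2 * τ) (t - τ)
  have hB2 := sq_integral_sub_mul_le hf (t - τ) t
  rw [show t - τ - (t - 2 * τ) = τ by ring] at hA hA2
  rw [show t - (t - τ) = τ by ring] at hB hB2
  set A := ∫ s in (t - 2 * τ)..(t - τ), (s - (t - 2 * τ)) * iteratedDeriv 2 r s
  set B := ∫ s in (t - τ)..t, (t - s) * iteratedDeriv 2 r s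
  have hf2 : Continuous fun s => iteratedDeriv 2 r s ^ 2 := hf.pow 2
  calc |r t - 2 * r (t - τ) + r (t - 2 * τ)| ^ 2 = (A + B) ^ 2 := by
        rw [sq_abs, hA, hB]; ring
    _ ≤ 2 * (A ^ 2 + B ^ 2) := add_sq_le
    _ ≤ 2 * (τ ^ 3 / 3 * (∫ s in (t - 2 * τ)..(t - τ), iteratedDeriv 2 r s ^ 2)
          + τ ^ 3 / 3 * ∫ s in (t - τ)..t, iteratedDeriv 2 r s ^ 2) := by gcongr
    _ = 2 * τ ^ 3 / 3 * ∫ s in (t - 2 * τ)..t, |iteratedDeriv 2 r s| ^ 2 := by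
        rw [← mul_add, integral_add_adjacent_intervals (hf2.intervalIntegrable _ _)
          (hf2.intervalIntegrable _ _)]
        simp only [sq_abs]
        ring

theorem stmt_8 (r : ℝ → ℝ) (hr : ContDiff ℝ 2 r) (τ : ℝ) (hτ : 0 < τ) (t : ℝ) :
    |r t - 2 * r (t - τ) + r (t - 2*τ)|^2
      ≤ 2 * τ^3 / 3 * ∫ s in (t - 2*τ)..t, |iteratedDeriv 2 r s|^2 :=
  stmt_8_general r hr τ t
end

section
/- Let r : ℝ → ℝ be three times continuously differentiable, τ > 0, and t ∈ ℝ. Then |r(t) - 3r(t-τ) + 3r(t-2τ) - r(t-3τ)|² ≤ (9τ⁵/8) ∫_{t-3τ}^{t} |r'''(s)|² ds. -/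
/-!
Writing `Δ` for the forward difference with step `τ`, the expression is `Δ³ r (t - 3τ)`.
For a `C¹` function, `Δ g x = ∫_x^{x+τ} g'`, so Cauchy–Schwarz gives
`(Δ g x)² ≤ τ ∫_x^{x+τ} g'²`. Since `Δ` commutes with differentiation, applying this to
`g = Δⁿ f` and bounding `(Δⁿ f')²` pointwise by induction yields
`(Δⁿ⁺¹ f x)² ≤ τ^(2n+1) ∫_x^{x+(n+1)τ} (f⁽ⁿ⁺¹⁾)²`. For `n = 2` this is `τ⁵ ∫ (r''')²`,
which is even better than the constant `9/8`.
-/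

open intervalIntegral fwdDiff
open MeasureTheory (volume)

lemma sq_intervalIntegral_le {g : ℝ → ℝ} {a b : ℝ} (hab : a ≤ b)
    (hg : IntervalIntegrable g volume a b)
    (hg2 : IntervalIntegrable (fun x => g x ^ 2) volume a b) :
    (∫ x in a..b, g x) ^ 2 ≤ (b - a) * ∫ x in a..b, g x ^ 2 := by
  set S := ∫ x in a..b, g x
  rcases hab.eq_or_lt with rfl | hlt
  · simp [S]
  have hnonneg : 0 ≤ ∫ x in a..b, ((b - a) * g x - S) ^ 2 :=
    integral_nonneg hab fun _ _ => sq_nonneg _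
  have hexpand : ∫ x in a..b, ((b - a) * g x - S) ^ 2
      = (b - a) * ((b - a) * (∫ x in a..b, g x ^ 2) - S ^ 2) := by
    have hpt : ∀ x, ((b - a) * g x - S) ^ 2
        = (b - a) ^ 2 * g x ^ 2 - (2 * (b - a) * S) * g x + S ^ 2 := fun x => by ring
    simp_rw [hpt]
    rw [integral_add ((hg2.const_mul _).sub (hg.const_mul _)) intervalIntegrable_const,
      integral_sub (hg2.const_mul _) (hg.const_mul _), integral_const_mul, integral_const_mul,
      integral_const, smul_eq_mul]
    ring
  rw [hexpand] at hnonneg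
  linarith [(mul_nonneg_iff_of_pos_left (sub_pos.2 hlt)).1 hnonneg]

lemma sq_fwdDiff_le_integral {g g' : ℝ → ℝ} (hg : ∀ x, HasDerivAt g (g' x) x)
    (hg' : Continuous g') {τ : ℝ} (hτ : 0 ≤ τ) (x : ℝ) :
    Δ_[τ] g x ^ 2 ≤ τ * ∫ y in x..x + τ, g' y ^ 2 := by
  have hftc : Δ_[τ] g x = ∫ y in x..x + τ, g' y :=
    (integral_eq_sub_of_hasDerivAt (fun y _ => hg y) (hg'.intervalIntegrable _ _)).symm
  rw [hftc]
  simpa using sq_intervalIntegral_le (le_add_of_nonneg_right hτ) (hg'.intervalIntegrable _ _)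
    ((hg'.pow 2).intervalIntegrable _ _)

lemma hasDerivAt_fwdDiff_iterate {𝕜 F : Type*} [NontriviallyNormedField 𝕜]
    [NormedAddCommGroup F] [NormedSpace 𝕜 F] {f f' : 𝕜 → F} (hf : ∀ x, HasDerivAt f (f' x) x)
    (h : 𝕜) (n : ℕ) (x : 𝕜) : HasDerivAt (Δ_[h] ^[n] f) (Δ_[h] ^[n] f' x) x := by
  induction n generalizing x with
  | zero => exact hf x
  | succ n ih =>
    rw [Function.iterate_succ_apply', Function.iterate_succ_apply']
    exact ((ih (x + h)).comp_add_const x h).sub (ih x)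

lemma Continuous.fwdDiff_iterate {M G : Type*} [TopologicalSpace M] [AddCommMonoid M]
    [ContinuousAdd M] [TopologicalSpace G] [AddCommGroup G] [IsTopologicalAddGroup G]
    {f : M → G} (hf : Continuous f) (h : M) (n : ℕ) : Continuous (Δ_[h] ^[n] f) := by
  induction n with
  | zero => exact hf
  | succ n ih =>
    rw [Function.iterate_succ']
    exact (ih.comp (continuous_add_const h)).sub ih

theorem sq_fwdDiff_iterate_le_integral {n : ℕ} {f : ℝ → ℝ} (hf : ContDiff ℝ (n + 1) f)
    {τ : ℝ} (hτ : 0 ≤ τ) (x : ℝ) :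
    Δ_[τ] ^[n + 1] f x ^ 2
      ≤ τ ^ (2 * n + 1) * ∫ y in x..x + (n + 1) * τ, iteratedDeriv (n + 1) f y ^ 2 := by
  induction n generalizing f x with
  | zero =>
    simpa [iteratedDeriv_one] using sq_fwdDiff_le_integral
      (fun y => (hf.differentiable (by simp) y).hasDerivAt) (hf.continuous_deriv le_rfl) hτ x
  | succ n ih =>
    set J := ∫ y in x..x + (↑(n + 1) + 1) * τ, iteratedDeriv (n + 1 + 1) f y ^ 2
    have hpointwise :
        ∀ y ∈ Set.Icc x (x + τ), Δ_[τ] ^[n + 1] (deriv f) y ^ 2 ≤ τ ^ (2 * n + 1) * J := by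
      rintro y ⟨hxy, hyx⟩
      refine (ih hf.deriv' y).trans (mul_le_mul_of_nonneg_left ?_ (by positivity))
      rw [← iteratedDeriv_succ']
      refine integral_mono_interval hxy (by nlinarith) (by push_cast; nlinarith)
        (Filter.Eventually.of_forall fun _ => sq_nonneg _)
        (((hf.continuous_iteratedDeriv _ le_rfl).pow 2).intervalIntegrable _ _)
    have hderiv := hasDerivAt_fwdDiff_iterate
      (fun y => (hf.differentiable (by simp) y).hasDerivAt) τ (n + 1)
    calc Δ_[τ] ^[n + 1 + 1] f x ^ 2 = Δ_[τ] (Δ_[τ] ^[n + 1] f) x ^ 2 := by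
          rw [Function.iterate_succ_apply']
      _ ≤ τ * ∫ y in x..x + τ, Δ_[τ] ^[n + 1] (deriv f) y ^ 2 :=
          sq_fwdDiff_le_integral hderiv ((hf.continuous_deriv (by simp)).fwdDiff_iterate _ _) hτ x
      _ ≤ τ * ∫ _ in x..x + τ, τ ^ (2 * n + 1) * J := by
          gcongr
          exact integral_mono_on (le_add_of_nonneg_right hτ)
            ((((hf.continuous_deriv (by simp)).fwdDiff_iterate _ _).pow 2).intervalIntegrable _ _)
            intervalIntegrable_const hpointwise
      _ = τ ^ (2 * (n + 1) + 1) * J := by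
          rw [integral_const, smul_eq_mul]
          ring

theorem stmt_9 (r : ℝ → ℝ) (hr : ContDiff ℝ 3 r) (τ : ℝ) (hτ : 0 < τ) (t : ℝ) :
    |r t - 3 * r (t - τ) + 3 * r (t - 2*τ) - r (t - 3*τ)|^2
      ≤ 9 * τ^5 / 8 * ∫ s in (t - 3*τ)..t, |iteratedDeriv 3 r s|^2 := by
  have hdiff :
      r t - 3 * r (t - τ) + 3 * r (t - 2*τ) - r (t - 3*τ) = Δ_[τ] ^[3] r (t - 3*τ) := by
    simp only [Function.iterate_succ_apply', Function.iterate_zero_apply, fwdDiff]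
    ring_nf
  have hbound := sq_fwdDiff_iterate_le_integral (n := 2) hr hτ.le (t - 3*τ)
  have hnonneg : 0 ≤ ∫ s in (t - 3*τ)..t, iteratedDeriv 3 r s ^ 2 :=
    integral_nonneg (by linarith) fun _ _ => sq_nonneg _
  simp only [sq_abs, hdiff]
  calc Δ_[τ] ^[3] r (t - 3*τ) ^ 2 ≤ τ ^ 5 * ∫ s in (t - 3*τ)..t, iteratedDeriv 3 r s ^ 2 := by
        convert hbound using 3; ring
    _ ≤ 9 * τ^5 / 8 * ∫ s in (t - 3*τ)..t, iteratedDeriv 3 r s ^ 2 := by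
        gcongr
        linarith [pow_pos hτ 5]
end

section
/- Let p : ℝ → ℝ be three times continuously differentiable and τ > 0. Then for every t, |p'(t) - (5p(t-τ) - 8p(t-2τ) + 3p(t-3τ))/(2τ)| ≤ C τ² max_{s ∈ [t-3τ, t]} |p'''(s)| for an absolute constant C (one may take C = 17/2). -/
/-!
Expand `p'(t)` to first order and `p(t - τ)`, `p(t - 3τ)` to second order about the middle node
`c = t - 2τ`. The difference quotient is exact on quadratics, so the defect is
`D - (5F + 3B) / (2τ)` for the three Taylor remainders `D, F, B`, and the Lagrange bounds give
`2τ²M + (8τ³M/6) / (2τ) = (8/3) τ² M ≤ (17/2) τ² M`.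
-/

open Set Finset Nat

theorem IsCompact.le_biSup_of_continuousOn {β : Type*} [TopologicalSpace β] {K : Set β}
    (hK : IsCompact K) {g : β → ℝ} (hg : ContinuousOn g K) {x : β} (hx : x ∈ K) :
    g x ≤ ⨆ y ∈ K, g y :=
  le_ciSup₂ (f := fun y (_ : y ∈ K) => g y)
    ((hK.bddAbove_image hg).mono (by rintro _ ⟨_, ⟨y, rfl⟩, hy, rfl⟩; exact ⟨y, hy, rfl⟩)) x hx

theorem abs_sub_taylor_le {f : ℝ → ℝ} {n : ℕ} (hf : ContDiff ℝ (n + 1) f) {x₀ x M : ℝ}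
    (hM : ∀ y ∈ uIcc x₀ x, |iteratedDeriv (n + 1) f y| ≤ M) :
    |f x - ∑ k ∈ range (n + 1), iteratedDeriv k f x₀ * (x - x₀) ^ k / k !|
      ≤ M * |x - x₀| ^ (n + 1) / (n + 1)! := by
  rcases eq_or_ne x₀ x with rfl | hne
  · simp [Finset.sum_range_succ']
  obtain ⟨y, hy, hrem⟩ := taylor_mean_remainder_lagrange_iteratedDeriv hne hf.contDiffOn
  have htaylor : taylorWithinEval f n (uIcc x₀ x) x₀ x
      = ∑ k ∈ range (n + 1), iteratedDeriv k f x₀ * (x - x₀) ^ k / k ! := by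
    rw [taylor_within_apply]
    refine Finset.sum_congr rfl fun k hk => ?_
    rw [iteratedDerivWithin_eq_iteratedDeriv (uniqueDiffOn_uIcc hne)
      (hf.contDiffAt.of_le (by exact_mod_cast (Finset.mem_range.1 hk).le)) left_mem_uIcc,
      smul_eq_mul]
    ring
  rw [← htaylor, hrem, abs_div, abs_mul, abs_pow, Nat.abs_cast]
  gcongr
  exact hM y (uIoo_subset_uIcc_self hy)

theorem abs_sub_taylor_two_le {f : ℝ → ℝ} (hf : ContDiff ℝ 3 f) {x h M : ℝ}
    (hM : ∀ y ∈ uIcc x (x + h), |iteratedDeriv 3 f y| ≤ M) :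
    |f (x + h) - f x - deriv f x * h - iteratedDeriv 2 f x * h ^ 2 / 2| ≤ M * |h| ^ 3 / 6 := by
  simpa [Finset.sum_range_succ, factorial, sub_sub] using abs_sub_taylor_le (n := 2) hf hM

theorem abs_deriv_sub_taylor_one_le {f : ℝ → ℝ} (hf : ContDiff ℝ 3 f) {x h M : ℝ}
    (hM : ∀ y ∈ uIcc x (x + h), |iteratedDeriv 3 f y| ≤ M) :
    |deriv f (x + h) - deriv f x - iteratedDeriv 2 f x * h| ≤ M * |h| ^ 2 / 2 := by
  have hM' : ∀ y ∈ uIcc x (x + h), |iteratedDeriv 2 (deriv f) y| ≤ M := by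
    simpa [← iteratedDeriv_succ'] using hM
  simpa [Finset.sum_range_succ, factorial, sub_sub, ← iteratedDeriv_succ'] using
    abs_sub_taylor_le (n := 1) hf.deriv' hM'

theorem abs_deriv_sub_delayed_bdf2_le {p : ℝ → ℝ} (hp : ContDiff ℝ 3 p) {c h M : ℝ} (hh : 0 < h)
    (hM : ∀ y ∈ Icc (c - h) (c + 2 * h), |iteratedDeriv 3 p y| ≤ M) :
    |deriv p (c + 2 * h) - (5 * p (c + h) - 8 * p c + 3 * p (c - h)) / (2 * h)|
      ≤ 8 / 3 * M * h ^ 2 := by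
  have hsub : ∀ y ∈ Icc (c - h) (c + 2 * h), ∀ z ∈ uIcc c y, |iteratedDeriv 3 p z| ≤ M :=
    fun y hy z hz => hM z (uIcc_subset_Icc ⟨by linarith, by linarith⟩ hy hz)
  have hD := abs_deriv_sub_taylor_one_le hp (hsub (c + 2 * h) ⟨by linarith, le_rfl⟩)
  have hF := abs_sub_taylor_two_le hp (hsub (c + h) ⟨by linarith, by linarith⟩)
  have hB := abs_sub_taylor_two_le hp (hsub (c + -h) ⟨by linarith, by linarith⟩)
  rw [← sub_eq_add_neg] at hB
  set D := deriv p (c + 2 * h) - deriv p c - iteratedDeriv 2 p c * (2 * h)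
  set F := p (c + h) - p c - deriv p c * h - iteratedDeriv 2 p c * h ^ 2 / 2
  set B := p (c - h) - p c - deriv p c * -h - iteratedDeriv 2 p c * (-h) ^ 2 / 2
  have hsplit : deriv p (c + 2 * h) - (5 * p (c + h) - 8 * p c + 3 * p (c - h)) / (2 * h)
      = D - (5 * F + 3 * B) / (2 * h) := by
    field_simp
    ring
  rw [hsplit]
  have h2h : 0 < 2 * h := by positivity
  calc |D - (5 * F + 3 * B) / (2 * h)| ≤ |D| + |5 * F + 3 * B| / (2 * h) :=
        (abs_sub _ _).trans_eq (by rw [abs_div, abs_of_pos h2h])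
    _ ≤ |D| + (5 * |F| + 3 * |B|) / (2 * h) := by
        gcongr
        simpa [abs_mul] using abs_add_le (5 * F) (3 * B)
    _ ≤ M * |2 * h| ^ 2 / 2 + (5 * (M * |h| ^ 3 / 6) + 3 * (M * |-h| ^ 3 / 6)) / (2 * h) := by
        gcongr
    _ = 8 / 3 * M * h ^ 2 := by
        rw [abs_neg, abs_of_pos h2h, abs_of_pos hh]
        field_simp
        ring

theorem stmt_11 (p : ℝ → ℝ) (hp : ContDiff ℝ 3 p) (τ : ℝ) (hτ : 0 < τ) (t : ℝ) :
    |deriv p t - (5 * p (t - τ) - 8 * p (t - 2*τ) + 3 * p (t - 3*τ)) / (2*τ)|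
      ≤ (17/2) * τ^2 * ⨆ s ∈ Set.Icc (t - 3*τ) t, |iteratedDeriv 3 p s| := by
  set M := ⨆ s ∈ Set.Icc (t - 3*τ) t, |iteratedDeriv 3 p s|
  have hM : ∀ s ∈ Icc (t - 3 * τ) t, |iteratedDeriv 3 p s| ≤ M := fun s hs =>
    isCompact_Icc.le_biSup_of_continuousOn
      (hp.continuous_iteratedDeriv 3 le_rfl).abs.continuousOn hs
  have hM₀ : 0 ≤ M := (abs_nonneg _).trans (hM t ⟨by linarith, le_rfl⟩)
  have h := abs_deriv_sub_delayed_bdf2_le hp (c := t - 2 * τ) hτ (M := M)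
  rw [show t - 2 * τ + 2 * τ = t by ring, show t - 2 * τ + τ = t - τ by ring,
    show t - 2 * τ - τ = t - 3 * τ by ring] at h
  calc _ ≤ 8 / 3 * M * τ ^ 2 := h hM
    _ ≤ 17 / 2 * τ ^ 2 * M := by nlinarith [mul_nonneg hM₀ (sq_nonneg τ)]
end
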